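/- Let G = ℤ/2 act on the quaternion algebra ℍ by conjugation by i, i.e. the generator τ acts by τ(q) = i·q·i⁻¹. Then the twisted group ring ℍ⋊G is isomorphic as an ℝ-algebra to the algebra M₂(ℂ) of 2×2 complex matrices. -/

import Mathlib

set_option linter.unusedSectionVars false

noncomputable section

namespace Paper

variable (A : Type*) [Ring A] (G : Type*) [Group G] [MulSemiringAction G A]

/-- The twisted group ring (crossed product) `A⋊G`: the free left `A`-module with basis `G`,
with multiplication determined by `(a·g)(b·h) = (a * g(b))·(gh)`. -/
def CrossedProduct : Type _ := G →₀ A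

namespace CrossedProduct

instance : AddCommGroup (CrossedProduct A G) := inferInstanceAs (AddCommGroup (G →₀ A))

instance {k : Type*} [Semiring k] [Module k A] : Module k (CrossedProduct A G) :=
  inferInstanceAs (Module k (G →₀ A))

variable {A G}

/-- The element `a·g` of the crossed product. -/
def single (g : G) (a : A) : CrossedProduct A G := Finsupp.single g a

theorem single_add (g : G) (a b : A) :
    (single g (a + b) : CrossedProduct A G) = single g a + single g b :=
  Finsupp.single_add g a b

theorem single_zero (g : G) : (single g 0 : CrossedProduct A G) = 0 :=
  Finsupp.single_zero g

theorem induction_linear {p : CrossedProduct A G → Prop} (f : CrossedProduct A G)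
    (h0 : p 0) (hadd : ∀ f g, p f → p g → p (f + g)) (hsingle : ∀ (g : G) (a : A), p (single g a)) :
    p f :=
  Finsupp.induction_linear f h0 hadd hsingle

noncomputable instance : Mul (CrossedProduct A G) :=
  ⟨fun f h => Finsupp.sum (f : G →₀ A) fun g a =>
    Finsupp.sum (h : G →₀ A) fun g' b => Finsupp.single (g * g') (a * g • b)⟩

theorem mul_def (f h : CrossedProduct A G) :
    f * h = Finsupp.sum (f : G →₀ A) fun g a =>
      Finsupp.sum (h : G →₀ A) fun g' b =>
        (single (g * g') (a * g • b) : CrossedProduct A G) := rfl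

noncomputable instance : One (CrossedProduct A G) := ⟨single 1 1⟩

theorem one_def : (1 : CrossedProduct A G) = single 1 1 := rfl

private theorem mul_zero' (f : CrossedProduct A G) : f * 0 = 0 := by
  rw [mul_def]
  exact Finset.sum_eq_zero fun _ _ => rfl

private theorem zero_mul' (f : CrossedProduct A G) : 0 * f = 0 :=
  Finsupp.sum_zero_index

private theorem mul_add' (f h k : CrossedProduct A G) : f * (h + k) = f * h + f * k := by
  simp only [mul_def, single]
  erw [← Finsupp.sum_add]
  refine Finsupp.sum_congr fun g _ => ?_
  erw [Finsupp.sum_add_index' (fun g' => by simp [-Finsupp.single_mul]; rfl) (fun g' b c => by simp [mul_add, smul_add, Finsupp.single_add, -Finsupp.single_mul]; rfl)]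

private theorem add_mul' (f h k : CrossedProduct A G) : (f + h) * k = f * k + h * k := by
  simp only [mul_def, single]
  erw [Finsupp.sum_add_index' (fun g => by simp [-Finsupp.single_mul]; unfold Finsupp.sum; simp; exact Finset.sum_const_zero) (fun g a b => ?_)]
  erw [← Finsupp.sum_add]
  refine Finsupp.sum_congr fun g' _ => ?_
  simp [add_mul, Finsupp.single_add, -Finsupp.single_mul]; rfl

theorem single_mul_single (g g' : G) (a b : A) :
    (single g a * single g' b : CrossedProduct A G) = single (g * g') (a * g • b) := by
  rw [mul_def]; simp only [single]
  erw [Finsupp.sum_single_index, Finsupp.sum_single_index]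
  · simp; rfl
  · exact Finset.sum_eq_zero fun _ _ => by simp; rfl

private theorem one_mul' (f : CrossedProduct A G) : 1 * f = f := by
  induction f using induction_linear with
  | h0 => exact mul_zero' 1
  | hadd f g hf hg => rw [mul_add', hf, hg]
  | hsingle g a => rw [one_def, single_mul_single, one_mul, one_smul, one_mul]

private theorem mul_one' (f : CrossedProduct A G) : f * 1 = f := by
  induction f using induction_linear with
  | h0 => exact zero_mul' 1
  | hadd f g hf hg => rw [add_mul', hf, hg]
  | hsingle g a => rw [one_def, single_mul_single, mul_one, smul_one, mul_one]

private theorem mul_assoc' (f h k : CrossedProduct A G) : f * h * k = f * (h * k) := by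
  induction f using induction_linear with
  | h0 => rw [zero_mul', zero_mul', zero_mul']
  | hadd f₁ f₂ h₁ h₂ => rw [add_mul', add_mul', add_mul', h₁, h₂]
  | hsingle g a =>
    induction h using induction_linear with
    | h0 => rw [mul_zero', zero_mul', mul_zero']
    | hadd h₁ h₂ ih₁ ih₂ => rw [mul_add', add_mul', ih₁, ih₂, add_mul', mul_add']
    | hsingle g' b =>
      induction k using induction_linear with
      | h0 => rw [mul_zero', mul_zero', mul_zero']
      | hadd k₁ k₂ ih₁ ih₂ => rw [mul_add', ih₁, ih₂, mul_add', mul_add']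
      | hsingle g'' c =>
        rw [single_mul_single, single_mul_single, single_mul_single, single_mul_single,
          mul_assoc, mul_smul, smul_mul', mul_assoc]

noncomputable instance : Ring (CrossedProduct A G) :=
  { (inferInstance : AddCommGroup (CrossedProduct A G)),
    (inferInstance : Mul (CrossedProduct A G)),
    (inferInstance : One (CrossedProduct A G)) with
    left_distrib := mul_add'
    right_distrib := add_mul'
    zero_mul := zero_mul'
    mul_zero := mul_zero'
    mul_assoc := mul_assoc'
    one_mul := one_mul'
    mul_one := mul_one' }

/-- The canonical inclusion of `A` into the crossed product `A⋊G`. -/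
noncomputable def ι : A →+* CrossedProduct A G where
  toFun a := single 1 a
  map_one' := rfl
  map_mul' a b := by rw [single_mul_single, one_mul, one_smul]
  map_zero' := single_zero 1
  map_add' a b := single_add 1 a b

end CrossedProduct

end Paper

end

/-- The quaternion `i`. -/
noncomputable def quatI : Quaternion ℝ := ⟨0, 1, 0, 0⟩

/-!
Conjugation by `i` is inner, so a ring map out of `ℍ⋊C₂` is given by the standard embedding
`φ : ℍ → M₂(ℂ)` together with an image `U` of the generator with `U * φ q = φ (i q i⁻¹) * U` and
`U² = 1`. The matrix `U = √-1 • φ i` works: the central scalar `√-1` does not change conjugation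
and turns `φ(i)² = -1` into `U² = 1`. The resulting map `a + b·τ ↦ φ a + φ b * U` is injective by
comparing entries, hence bijective since both sides have real dimension `8`.
-/

namespace Paper.CrossedProduct

variable {A G B : Type*} [Ring A] [Group G] [MulSemiringAction G A] [Ring B]

noncomputable def liftAddHom (φ : A →+ B) (ρ : G → B) : CrossedProduct A G →+ B :=
  Finsupp.liftAddHom fun g => (AddMonoidHom.mulRight (ρ g)).comp φ

theorem liftAddHom_single (φ : A →+ B) (ρ : G → B) (g : G) (a : A) :
    liftAddHom φ ρ (single g a) = φ a * ρ g :=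
  Finsupp.liftAddHom_apply_single _ g a

theorem liftAddHom_mul (φ : A →+* B) (ρ : G →* B) (hφρ : ∀ g a, ρ g * φ a = φ (g • a) * ρ g)
    (f f' : CrossedProduct A G) :
    liftAddHom φ ρ (f * f') = liftAddHom φ ρ f * liftAddHom φ ρ f' := by
  induction f using induction_linear with
  | h0 => simp
  | hadd f₁ f₂ h₁ h₂ => rw [add_mul, map_add, map_add, h₁, h₂, add_mul]
  | hsingle g a =>
    induction f' using induction_linear with
    | h0 => simp
    | hadd f₁ f₂ h₁ h₂ => rw [mul_add, map_add, map_add, h₁, h₂, mul_add]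
    | hsingle g' b =>
      simp only [single_mul_single, liftAddHom_single, AddMonoidHom.coe_coe, map_mul, mul_assoc]
      rw [← mul_assoc (ρ g), hφρ, mul_assoc]

noncomputable def lift (φ : A →+* B) (ρ : G →* B) (hφρ : ∀ g a, ρ g * φ a = φ (g • a) * ρ g) :
    CrossedProduct A G →+* B :=
  { liftAddHom φ ρ with
    map_one' := by simp [one_def, liftAddHom_single]
    map_mul' := liftAddHom_mul φ ρ hφρ }

theorem lift_single (φ : A →+* B) (ρ : G →* B) (hφρ : ∀ g a, ρ g * φ a = φ (g • a) * ρ g)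
    (g : G) (a : A) : lift φ ρ hφρ (single g a) = φ a * ρ g :=
  liftAddHom_single _ _ g a

theorem lift_smul {R : Type*} [CommSemiring R] [Algebra R A] [Algebra R B] (φ : A →ₐ[R] B)
    (ρ : G →* B) (hφρ : ∀ g a, ρ g * φ a = φ (g • a) * ρ g) (r : R) (f : CrossedProduct A G) :
    lift φ.toRingHom ρ hφρ (r • f) = r • lift φ.toRingHom ρ hφρ f := by
  induction f using induction_linear with
  | h0 => rw [smul_zero, map_zero, smul_zero]
  | hadd f₁ f₂ h₁ h₂ => rw [smul_add, map_add, map_add, h₁, h₂, smul_add]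
  | hsingle g a =>
    rw [show r • single g a = single g (r • a) from Finsupp.smul_single r g a, lift_single,
      lift_single, AlgHom.toRingHom_eq_coe, RingHom.coe_coe, map_smul, smul_mul_assoc]

theorem lift_bijective_of_injective {K : Type*} [Field K] [Algebra K A] [Algebra K B] [Fintype G]
    [FiniteDimensional K A] [FiniteDimensional K B] (φ : A →ₐ[K] B) (ρ : G →* B)
    (hφρ : ∀ g a, ρ g * φ a = φ (g • a) * ρ g)
    (hdim : Fintype.card G * Module.finrank K A = Module.finrank K B)
    (hinj : Function.Injective (lift φ.toRingHom ρ hφρ)) :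
    Function.Bijective (lift φ.toRingHom ρ hφρ) := by
  let Φ : CrossedProduct A G →ₗ[K] B :=
    { toFun := lift φ.toRingHom ρ hφρ
      map_add' := map_add _
      map_smul' := lift_smul φ ρ hφρ }
  have : FiniteDimensional K (CrossedProduct A G) := inferInstanceAs (FiniteDimensional K (G →₀ A))
  have hrank : Module.finrank K (G →₀ A) = Module.finrank K B := by
    rw [← hdim, (Finsupp.linearEquivFunOnFinite K A G).finrank_eq, Module.finrank_pi_fintype,
      Finset.sum_const, Finset.card_univ, smul_eq_mul]
  exact ⟨hinj, (LinearMap.injective_iff_surjective_of_finrank_eq_finrank hrank (f := Φ)).mp hinj⟩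

theorem exists_eq_single_one_add_single_ofAdd_one
    [MulSemiringAction (Multiplicative (ZMod 2)) A] (f : CrossedProduct A (Multiplicative (ZMod 2))) :
    ∃ a b, f = single 1 a + single (Multiplicative.ofAdd 1) b := by
  induction f using induction_linear with
  | h0 => exact ⟨0, 0, by rw [single_zero, single_zero, add_zero]⟩
  | hadd f f' hf hf' =>
    obtain ⟨a, b, rfl⟩ := hf
    obtain ⟨a', b', rfl⟩ := hf'
    exact ⟨a + a', b + b', by rw [single_add, single_add]; abel⟩
  | hsingle g a =>
    obtain rfl | rfl : g = 1 ∨ g = Multiplicative.ofAdd 1 := by revert g; decide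
    · exact ⟨a, 0, by rw [single_zero, add_zero]⟩
    · exact ⟨0, a, by rw [single_zero, zero_add]⟩

end Paper.CrossedProduct

open Complex Multiplicative Paper Paper.CrossedProduct
open scoped Quaternion

def zmodPowersHom {M : Type*} [Monoid M] {n : ℕ} [NeZero n] (x : M) (hx : x ^ n = 1) :
    Multiplicative (ZMod n) →* M where
  toFun g := x ^ (toAdd g).val
  map_one' := by rw [toAdd_one, ZMod.val_zero, pow_zero]
  map_mul' a b := by rw [toAdd_mul, ZMod.val_add, ← pow_eq_pow_mod _ hx, pow_add]

noncomputable def quaternionMatrixBasis :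
    QuaternionAlgebra.Basis (Matrix (Fin 2) (Fin 2) ℂ) (-1 : ℝ) 0 (-1) where
  i := !![I, 0; 0, -I]
  j := !![0, 1; -1, 0]
  k := !![0, I; I, 0]
  i_mul_i := by ext i j; fin_cases i <;> fin_cases j <;> simp
  j_mul_j := by ext i j; fin_cases i <;> fin_cases j <;> simp
  i_mul_j := by ext i j; fin_cases i <;> fin_cases j <;> simp
  j_mul_i := by ext i j; fin_cases i <;> fin_cases j <;> simp

noncomputable def quaternionToMatrix : ℍ[ℝ] →ₐ[ℝ] Matrix (Fin 2) (Fin 2) ℂ :=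
  quaternionMatrixBasis.liftHom

theorem quaternionToMatrix_apply (q : ℍ[ℝ]) :
    quaternionToMatrix q = !![⟨q.re, q.imI⟩, ⟨q.imJ, q.imK⟩; ⟨-q.imJ, q.imK⟩, ⟨q.re, -q.imI⟩] := by
  change quaternionMatrixBasis.lift q = _
  ext i j; fin_cases i <;> fin_cases j <;>
    simp [QuaternionAlgebra.Basis.lift, quaternionMatrixBasis, Algebra.algebraMap_eq_smul_one,
      Complex.ext_iff]

@[simp] theorem quatI_re : quatI.re = 0 := rfl
@[simp] theorem quatI_imI : quatI.imI = 1 := rfl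
@[simp] theorem quatI_imJ : quatI.imJ = 0 := rfl
@[simp] theorem quatI_imK : quatI.imK = 0 := rfl

theorem quatI_mul_quatI : quatI * quatI = -1 := by
  ext <;> simp

theorem quatI_ne_zero : quatI ≠ 0 := by
  intro h
  simpa using congrArg QuaternionAlgebra.imI h

noncomputable def twistMatrix : Matrix (Fin 2) (Fin 2) ℂ := I • quaternionToMatrix quatI

theorem twistMatrix_eq : twistMatrix = !![-1, 0; 0, 1] := by
  rw [twistMatrix, quaternionToMatrix_apply]
  ext i j; fin_cases i <;> fin_cases j <;> simp [Complex.ext_iff]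

theorem twistMatrix_sq : twistMatrix ^ 2 = 1 := by
  rw [sq, twistMatrix, smul_mul_smul_comm, I_mul_I, ← map_mul, quatI_mul_quatI, map_neg, map_one,
    neg_one_smul, neg_neg]

theorem quaternionToMatrix_add_mul_twistMatrix_eq_zero {a b : ℍ[ℝ]}
    (h : quaternionToMatrix a + quaternionToMatrix b * twistMatrix = 0) : a = 0 ∧ b = 0 := by
  have h00 := congrFun (congrFun h 0) 0
  have h01 := congrFun (congrFun h 0) 1
  have h10 := congrFun (congrFun h 1) 0
  have h11 := congrFun (congrFun h 1) 1
  simp [quaternionToMatrix_apply, twistMatrix_eq, Complex.ext_iff] at h00 h01 h10 h11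
  constructor <;> ext <;> simp <;> linarith

noncomputable def twistHom : Multiplicative (ZMod 2) →* Matrix (Fin 2) (Fin 2) ℂ :=
  zmodPowersHom twistMatrix twistMatrix_sq

theorem twistHom_ofAdd_one : twistHom (ofAdd 1) = twistMatrix := pow_one twistMatrix

section ConjByI

variable [MulSemiringAction (Multiplicative (ZMod 2)) ℍ[ℝ]]
  (hact : ∀ q : ℍ[ℝ], ofAdd (1 : ZMod 2) • q = quatI * q * quatI⁻¹)
include hact

theorem twistHom_mul_quaternionToMatrix (g : Multiplicative (ZMod 2)) (a : ℍ[ℝ]) :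
    twistHom g * quaternionToMatrix a = quaternionToMatrix (g • a) * twistHom g := by
  obtain rfl | rfl : g = 1 ∨ g = ofAdd 1 := by revert g; decide
  · rw [map_one, one_smul, one_mul, mul_one]
  · rw [hact, twistHom_ofAdd_one, twistMatrix, mul_smul_comm, smul_mul_assoc, ← map_mul,
      ← map_mul, inv_mul_cancel_right₀ quatI_ne_zero, map_mul]

theorem lift_quaternionToMatrix_twistHom_injective :
    Function.Injective
      (lift quaternionToMatrix.toRingHom twistHom (twistHom_mul_quaternionToMatrix hact)) := by
  refine (injective_iff_map_eq_zero _).mpr fun f hf => ?_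
  obtain ⟨a, b, rfl⟩ := exists_eq_single_one_add_single_ofAdd_one f
  rw [map_add, lift_single, lift_single, map_one, mul_one, twistHom_ofAdd_one] at hf
  obtain ⟨rfl, rfl⟩ := quaternionToMatrix_add_mul_twistMatrix_eq_zero hf
  rw [single_zero, single_zero, add_zero]

end ConjByI

open Paper in
/-- Let `G = ℤ/2` act on the quaternion algebra `ℍ` by conjugation by `i`,
i.e. the generator acts by `q ↦ i·q·i⁻¹`.  Then the twisted group ring `ℍ⋊G` is isomorphic,
as an `ℝ`-algebra, to `M₂(ℂ)`. -/
theorem crossedProduct_quaternion_conjByI_iso_matrix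
    [MulSemiringAction (Multiplicative (ZMod 2)) (Quaternion ℝ)]
    (hact : ∀ q : Quaternion ℝ,
      (Multiplicative.ofAdd (1 : ZMod 2)) • q = quatI * q * quatI⁻¹) :
    ∃ e : CrossedProduct (Quaternion ℝ) (Multiplicative (ZMod 2)) ≃+*
        Matrix (Fin 2) (Fin 2) ℂ,
      ∀ (r : ℝ) (f : CrossedProduct (Quaternion ℝ) (Multiplicative (ZMod 2))),
        e (r • f) = r • e f := by
  have hcov := twistHom_mul_quaternionToMatrix hact
  have hdim : Fintype.card (Multiplicative (ZMod 2)) * Module.finrank ℝ ℍ[ℝ] =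
      Module.finrank ℝ (Matrix (Fin 2) (Fin 2) ℂ) := by
    simp [Module.finrank_matrix, Complex.finrank_real_complex, Quaternion.finrank_eq_four]
  exact ⟨RingEquiv.ofBijective _ (lift_bijective_of_injective quaternionToMatrix twistHom hcov hdim
    (lift_quaternionToMatrix_twistHom_injective hact)), lift_smul quaternionToMatrix twistHom hcov⟩
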